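/- Let V be a unital Jordan algebra over ℝ, let a ≠ 0 and b ≠ 0 be idempotents and let 0 < λ < 1 satisfy 2a·(a·b) − a·b = λ·a and 2b·(b·a) − b·a = λ·b (i.e. P(a)b = λa and P(b)a = λb). Set p := a·b. Then: (i) a·p = ½(p + λa), b·p = ½(p + λb) and p·p = (λ/4)(a + b + 2p), so the ℝ-linear span of {a, b, p} is closed under multiplication and equals the subalgebra generated by a and b; (ii) a, b, p are linearly independent over ℝ; (iii) with θ := arccos(√λ) ∈ (0, π/2), there is a unique injective ℝ-linear map φ from the span of {a, b, p} into the 2×2 real matrices such that φ(x·y) = ½(φ(x)φ(y) + φ(y)φ(x)) for all x, y in the span, φ(a) = [[1,0],[0,0]] and φ(b) = [[cos²θ, ½ sin 2θ],[½ sin 2θ, sin²θ]]. -/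

import Mathlib

/-!
Expanding the Jordan identity at `x = a + b`, `y = b` and using `P(a)b = λa`, `P(b)a = λb` gives
the whole multiplication table of `a`, `b`, `p = a·b`. The same table is satisfied, for the Jordan
product `½(XY + YX)`, by the projections `A`, `B` of `ℝ²` onto the lines through `(1, 0)` and
`(cos θ, sin θ)` with `λ = cos² θ`, and by `P = ½(AB + BA)`. Since `P(a)` maps `s a + t p` to
`(s + λt) a`, and symmetrically for `b`, the elements `a, b, p` are linearly independent, and so
are `A, B, P`. So the linear map `a, b, p ↦ A, B, P` exists and is injective on the span; both
products being bilinear, it is multiplicative on the span because it is on the generators. It is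
unique because `p = a·b` forces the image of `p`.
-/

/-- The representation property of a linear map `φ : V → M₂(ℝ)` on the span of `{a, b, p}`
(where `p = a·b`): `φ` is injective on the span, satisfies
`φ(x·y) = ½(φ(x)φ(y) + φ(y)φ(x))` for `x, y` in the span, and sends `a` to
`[[1,0],[0,0]]` and `b` to `[[cos²θ, ½ sin 2θ],[½ sin 2θ, sin²θ]]`. -/
def IsAngleRep {V : Type*} [NonAssocRing V] [Module ℝ V]
    (a b p : V) (θ : ℝ) (φ : V →ₗ[ℝ] Matrix (Fin 2) (Fin 2) ℝ) : Prop :=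
  Set.InjOn φ (Submodule.span ℝ ({a, b, p} : Set V)) ∧
  (∀ x ∈ Submodule.span ℝ ({a, b, p} : Set V),
    ∀ y ∈ Submodule.span ℝ ({a, b, p} : Set V),
      φ (x * y) = (1 / 2 : ℝ) • (φ x * φ y + φ y * φ x)) ∧
  φ a = !![1, 0; 0, 0] ∧
  φ b = !![Real.cos θ ^ 2, (1 / 2) * Real.sin (2 * θ);
           (1 / 2) * Real.sin (2 * θ), Real.sin θ ^ 2]

/-- The multiplication table of `a`, `b`, `p = a·b`, stated for an arbitrary product `mul` so that
it applies both in `V` and to the Jordan product of matrices. -/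
structure TwoIdempotentTable {M : Type*} [AddCommGroup M] [Module ℝ M]
    (mul : M → M → M) (a b p : M) (l : ℝ) : Prop where
  aa : mul a a = a
  bb : mul b b = b
  ab : mul a b = p
  ba : mul b a = p
  ap : mul a p = (1 / 2 : ℝ) • (p + l • a)
  pa : mul p a = (1 / 2 : ℝ) • (p + l • a)
  bp : mul b p = (1 / 2 : ℝ) • (p + l • b)
  pb : mul p b = (1 / 2 : ℝ) • (p + l • b)
  pp : mul p p = (l / 4 : ℝ) • (a + b + (2 : ℝ) • p)

namespace TwoIdempotentTable

section General

variable {M : Type*} [AddCommGroup M] [Module ℝ M] {mul : M → M → M} {a b p : M} {l : ℝ}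

theorem symm (T : TwoIdempotentTable mul a b p l) : TwoIdempotentTable mul b a p l where
  aa := T.bb
  bb := T.aa
  ab := T.ba
  ba := T.ab
  ap := T.bp
  pa := T.pb
  bp := T.ap
  pb := T.pa
  pp := by rw [T.pp, add_comm a]

theorem map_mul_of_mem {N : Type*} [AddCommGroup N] [Module ℝ N] {mul' : N → N → N}
    {a' b' p' : N} (T : TwoIdempotentTable mul a b p l) (T' : TwoIdempotentTable mul' a' b' p' l)
    (φ : M →ₗ[ℝ] N) (ha : φ a = a') (hb : φ b = b') (hp : φ p = p') :
    ∀ u ∈ ({a, b, p} : Set M), ∀ v ∈ ({a, b, p} : Set M), φ (mul u v) = mul' (φ u) (φ v) := by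
  rintro _ (rfl | rfl | rfl) _ (rfl | rfl | rfl) <;>
    simp only [T.aa, T.bb, T.ab, T.ba, T.ap, T.pa, T.bp, T.pb, T.pp, T'.aa, T'.bb, T'.ab, T'.ba,
      T'.ap, T'.pa, T'.bp, T'.pb, T'.pp, map_add, map_smul, ha, hb, hp]

end General

section Ring

variable {V : Type*} [NonAssocRing V] [Module ℝ V] {a b p : V} {l : ℝ}

theorem of_jordan [SMulCommClass ℝ V V] (comm : ∀ x y : V, x * y = y * x)
    (jordan : ∀ x y : V, (x * y) * (x * x) = x * (y * (x * x)))
    (ha : a * a = a) (hb : b * b = b)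
    (hPa : (2 : ℝ) • (a * (a * b)) - a * b = l • a)
    (hPb : (2 : ℝ) • (b * (b * a)) - b * a = l • b) :
    TwoIdempotentTable (· * ·) a b (a * b) l := by
  have ap : a * (a * b) = (1 / 2 : ℝ) • (a * b + l • a) := by
    rw [← hPa]; module
  have bp : b * (a * b) = (1 / 2 : ℝ) • (a * b + l • b) := by
    rw [comm a b, ← hPb, comm b a]; module
  refine ⟨ha, hb, rfl, comm b a, ap, by rw [comm, ap], bp, by rw [comm, bp], ?_⟩
  have h := jordan (a + b) b
  simp only [mul_add, add_mul, ha, hb, comm b a, comm (a * b) a, comm (a * b) b, ap, bp,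
    mul_smul_comm, smul_add] at h
  linear_combination (norm := module) (1 / 2 : ℝ) • h

theorem mul_mem_span (T : TwoIdempotentTable (· * ·) a b p l) :
    ∀ u ∈ ({a, b, p} : Set V), ∀ v ∈ ({a, b, p} : Set V),
      u * v ∈ Submodule.span ℝ ({a, b, p} : Set V) := by
  have ha : a ∈ Submodule.span ℝ ({a, b, p} : Set V) := Submodule.subset_span (by simp)
  have hb : b ∈ Submodule.span ℝ ({a, b, p} : Set V) := Submodule.subset_span (by simp)
  have hp : p ∈ Submodule.span ℝ ({a, b, p} : Set V) := Submodule.subset_span (by simp)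
  rintro _ (rfl | rfl | rfl) _ (rfl | rfl | rfl) <;>
    simp only [T.aa, T.bb, T.ab, T.ba, T.ap, T.pa, T.bp, T.pb, T.pp] <;>
    repeat' first | assumption | apply add_mem | apply Submodule.smul_mem

variable [SMulCommClass ℝ V V]

theorem mul_left_eq (T : TwoIdempotentTable (· * ·) a b p l) (r s t : ℝ) :
    a * (r • a + s • b + t • p) = (r + t * l / 2) • a + (s + t / 2) • p := by
  simp only [mul_add, mul_smul_comm, T.aa, T.ab, T.ap]
  module

theorem add_mul_eq_zero_of_smul_add_smul_eq_zero (T : TwoIdempotentTable (· * ·) a b p l)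
    (ha : a ≠ 0) {s t : ℝ} (h : s • a + t • p = 0) : s + l * t = 0 := by
  have hP := congrArg (fun x => (2 : ℝ) • (a * (a * x)) - a * x) h
  simp only [mul_add, mul_smul_comm, T.aa, T.ap, mul_zero, smul_zero, sub_zero] at hP
  have hsa : (s + l * t) • a = 0 := by linear_combination (norm := module) hP
  exact (smul_eq_zero.1 hsa).resolve_right ha

theorem eq_zero_of_smul_add_smul_eq_zero (T : TwoIdempotentTable (· * ·) a b p l)
    (ha : a ≠ 0) (hb : b ≠ 0) (hl0 : l ≠ 0) (hl1 : l ≠ 1) {s t : ℝ} (h : s • a + t • p = 0) :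
    s = 0 ∧ t = 0 := by
  have hbp : (0 + t * l / 2) • b + (s + t / 2) • p = 0 := by
    rw [← T.symm.mul_left_eq, zero_smul, zero_add, h, mul_zero]
  have h1 := T.add_mul_eq_zero_of_smul_add_smul_eq_zero ha h
  have h2 := T.symm.add_mul_eq_zero_of_smul_add_smul_eq_zero hb hbp
  have hst : s + t = 0 := by
    refine (mul_eq_zero.1 (?_ : l * (s + t) = 0)).resolve_left hl0
    linear_combination h2
  have ht : t = 0 := by
    refine (mul_eq_zero.1 (?_ : t * (l - 1) = 0)).resolve_right (sub_ne_zero.2 hl1)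
    linear_combination h1 - hst
  exact ⟨by linarith, ht⟩

theorem linearIndependent (T : TwoIdempotentTable (· * ·) a b p l)
    (ha : a ≠ 0) (hb : b ≠ 0) (hl0 : l ≠ 0) (hl1 : l ≠ 1) : LinearIndependent ℝ ![a, b, p] := by
  refine Fintype.linearIndependent_iff.2 fun g hg => ?_
  simp only [Fin.sum_univ_three, Matrix.cons_val_zero, Matrix.cons_val_one,
    Matrix.cons_val_two, Matrix.head_cons, Matrix.tail_cons] at hg
  have hg' : g 1 • b + g 0 • a + g 2 • p = 0 := by rw [← hg]; abel
  obtain ⟨ha0, -⟩ := T.eq_zero_of_smul_add_smul_eq_zero ha hb hl0 hl1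
    (by rw [← T.mul_left_eq, hg, mul_zero])
  obtain ⟨hb0, hb1⟩ := T.symm.eq_zero_of_smul_add_smul_eq_zero hb ha hl0 hl1
    (by rw [← T.symm.mul_left_eq, hg', mul_zero])
  have h2 : g 2 = 0 := by
    refine (mul_eq_zero.1 (?_ : g 2 * (l - 1) = 0)).resolve_right (sub_ne_zero.2 hl1)
    linear_combination 2 * ha0 - 2 * hb1
  intro i
  fin_cases i <;> simp <;> linarith

end Ring

end TwoIdempotentTable

theorem mul_mem_span_of_mul_mem {R A : Type*} [CommSemiring R] [NonUnitalNonAssocSemiring A]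
    [Module R A] [SMulCommClass R A A] [IsScalarTower R A A] {S : Set A}
    (hS : ∀ u ∈ S, ∀ v ∈ S, u * v ∈ Submodule.span R S) {x y : A}
    (hx : x ∈ Submodule.span R S) (hy : y ∈ Submodule.span R S) : x * y ∈ Submodule.span R S := by
  induction hx, hy using Submodule.span_induction₂ with
  | mem_mem u v hu hv => exact hS u hu v hv
  | zero_left y _ => simp
  | zero_right x _ => simp
  | add_left x y z _ _ _ hxz hyz => rw [add_mul]; exact add_mem hxz hyz
  | add_right x y z _ _ _ hxy hxz => rw [mul_add]; exact add_mem hxy hxz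
  | smul_left r x y _ _ hxy => rw [smul_mul_assoc]; exact Submodule.smul_mem _ r hxy
  | smul_right r x y _ _ hxy => rw [mul_smul_comm]; exact Submodule.smul_mem _ r hxy

noncomputable def jordanMul {A : Type*} [Ring A] [Module ℝ A] (X Y : A) : A :=
  (1 / 2 : ℝ) • (X * Y + Y * X)

theorem map_mul_eq_jordanMul_of_mem_span {V A : Type*} [NonUnitalNonAssocRing V] [Module ℝ V]
    [SMulCommClass ℝ V V] [IsScalarTower ℝ V V] [Ring A] [Algebra ℝ A] (φ : V →ₗ[ℝ] A)
    {S : Set V} (hS : ∀ u ∈ S, ∀ v ∈ S, φ (u * v) = jordanMul (φ u) (φ v)) {x y : V}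
    (hx : x ∈ Submodule.span ℝ S) (hy : y ∈ Submodule.span ℝ S) :
    φ (x * y) = jordanMul (φ x) (φ y) := by
  induction hx, hy using Submodule.span_induction₂ with
  | mem_mem u v hu hv => exact hS u hu v hv
  | zero_left y _ => simp [jordanMul]
  | zero_right x _ => simp [jordanMul]
  | add_left x y z _ _ _ hxz hyz =>
    rw [add_mul, map_add, hxz, hyz, map_add]
    simp only [jordanMul, add_mul, mul_add]; module
  | add_right x y z _ _ _ hxy hxz =>
    rw [mul_add, map_add, hxy, hxz, map_add]
    simp only [jordanMul, add_mul, mul_add]; module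
  | smul_left r x y _ _ hxy =>
    rw [smul_mul_assoc, map_smul, hxy, map_smul]
    simp only [jordanMul, smul_mul_assoc, mul_smul_comm]; module
  | smul_right r x y _ _ hxy =>
    rw [mul_smul_comm, map_smul, hxy, map_smul]
    simp only [jordanMul, smul_mul_assoc, mul_smul_comm]; module

theorem exists_linearMap_injOn_span {K V M ι : Type*} [Field K] [AddCommGroup V] [Module K V]
    [AddCommGroup M] [Module K M] {v : ι → V} (hv : LinearIndependent K v) {w : ι → M}
    (hw : LinearIndependent K w) :
    ∃ φ : V →ₗ[K] M, (∀ i, φ (v i) = w i) ∧ Set.InjOn φ (Submodule.span K (Set.range v)) := by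
  let e := Module.Basis.span hv
  obtain ⟨φ, hφ⟩ := LinearMap.exists_extend (e.constr K w)
  refine ⟨φ, fun i => ?_, ?_⟩
  · have := LinearMap.congr_fun hφ (e i)
    rwa [e.constr_basis, LinearMap.comp_apply, Module.Basis.span_apply] at this
  · rw [Set.injOn_iff_injective]
    change Function.Injective (φ ∘ₗ (Submodule.span K (Set.range v)).subtype)
    rw [hφ]
    exact e.injective_constr_of_linearIndependent hw

/-- For `c² + s² = 1`, the orthogonal projection of `ℝ²` onto the line through `(c, s)`. -/
def projLine (c s : ℝ) : Matrix (Fin 2) (Fin 2) ℝ := !![c ^ 2, c * s; c * s, s ^ 2]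

theorem twoIdempotentTable_projLine {c s : ℝ} (h : c ^ 2 + s ^ 2 = 1) :
    TwoIdempotentTable jordanMul (projLine 1 0) (projLine c s)
      (jordanMul (projLine 1 0) (projLine c s)) (c ^ 2) := by
  refine ⟨?_, ?_, rfl, ?_, ?_, ?_, ?_, ?_, ?_⟩ <;>
    ext i j <;> fin_cases i <;> fin_cases j <;>
    simp [jordanMul, projLine] <;> grind

theorem linearIndependent_projLine {c s : ℝ} (hc : c ≠ 0) (hs : s ≠ 0) :
    LinearIndependent ℝ
      ![projLine 1 0, projLine c s, jordanMul (projLine 1 0) (projLine c s)] := by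
  refine Fintype.linearIndependent_iff.2 fun g hg => ?_
  have h00 := congrFun (congrFun hg 0) 0
  have h01 := congrFun (congrFun hg 0) 1
  have h11 := congrFun (congrFun hg 1) 1
  simp [Fin.sum_univ_three, projLine, jordanMul] at h00 h01 h11
  have h1 : g 1 = 0 := h11.resolve_right hs
  have h2 : g 2 = 0 := by simpa [h1, hc, hs] using h01
  have h0 : g 0 = 0 := by simpa [h1, h2] using h00
  intro i
  fin_cases i <;> assumption

theorem projLine_cos_sin (θ : ℝ) :
    projLine (Real.cos θ) (Real.sin θ) = !![Real.cos θ ^ 2, (1 / 2) * Real.sin (2 * θ);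
      (1 / 2) * Real.sin (2 * θ), Real.sin θ ^ 2] := by
  rw [projLine, Real.sin_two_mul]
  ext i j; fin_cases i <;> fin_cases j <;> simp <;> ring

theorem TwoIdempotentTable.exists_isAngleRep {V : Type*} [NonAssocRing V] [Module ℝ V]
    [SMulCommClass ℝ V V] [IsScalarTower ℝ V V] {a b p : V} {θ : ℝ}
    (T : TwoIdempotentTable (· * ·) a b p (Real.cos θ ^ 2)) (hli : LinearIndependent ℝ ![a, b, p])
    (hc : Real.cos θ ≠ 0) (hs : Real.sin θ ≠ 0) :
    ∃ φ : V →ₗ[ℝ] Matrix (Fin 2) (Fin 2) ℝ, IsAngleRep a b p θ φ := by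
  obtain ⟨φ, hφ, hinj⟩ := exists_linearMap_injOn_span hli (linearIndependent_projLine hc hs)
  simp only [Matrix.range_cons, Matrix.range_empty, Set.union_empty, Set.singleton_union]
    at hinj
  have hmul := T.map_mul_of_mem (twoIdempotentTable_projLine (Real.cos_sq_add_sin_sq θ)) φ
    (hφ 0) (hφ 1) (hφ 2)
  refine ⟨φ, hinj, fun x hx y hy => map_mul_eq_jordanMul_of_mem_span φ hmul hx hy,
    (hφ 0).trans (by simp [projLine]), (hφ 1).trans (projLine_cos_sin θ)⟩

theorem IsAngleRep.eqOn_span {V : Type*} [NonAssocRing V] [Module ℝ V] {a b : V} {θ : ℝ}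
    {φ ψ : V →ₗ[ℝ] Matrix (Fin 2) (Fin 2) ℝ} (hφ : IsAngleRep a b (a * b) θ φ)
    (hψ : IsAngleRep a b (a * b) θ ψ) :
    Set.EqOn φ ψ (Submodule.span ℝ ({a, b, a * b} : Set V)) := by
  obtain ⟨-, hφmul, hφa, hφb⟩ := hφ
  obtain ⟨-, hψmul, hψa, hψb⟩ := hψ
  have ha : a ∈ Submodule.span ℝ ({a, b, a * b} : Set V) := Submodule.subset_span (by simp)
  have hb : b ∈ Submodule.span ℝ ({a, b, a * b} : Set V) := Submodule.subset_span (by simp)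
  refine LinearMap.eqOn_span' ?_
  rintro _ (rfl | rfl | rfl)
  · rw [hφa, hψa]
  · rw [hφb, hψb]
  · rw [hφmul a ha b hb, hψmul a ha b hb, hφa, hφb, hψa, hψb]

theorem arccos_sqrt_mem_Ioo_and_cos_sq {l : ℝ} (hl0 : 0 < l) (hl1 : l < 1) :
    Real.arccos √l ∈ Set.Ioo 0 (Real.pi / 2) ∧ Real.cos (Real.arccos √l) ^ 2 = l := by
  have hs1 : √l < 1 := by simpa using Real.sqrt_lt_sqrt hl0.le hl1
  refine ⟨⟨Real.arccos_pos.2 hs1, Real.arccos_lt_pi_div_two.2 (Real.sqrt_pos.2 hl0)⟩, ?_⟩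
  rw [Real.cos_arccos (by linarith [Real.sqrt_nonneg l]) hs1.le, Real.sq_sqrt hl0.le]

/-- Let `a ≠ 0`, `b ≠ 0` be idempotents in a unital real Jordan algebra
with `P(a)b = λa` and `P(b)a = λb` for some `0 < λ < 1`, and set `p := a·b`.  Then:
(i) `a·p = ½(p + λa)`, `b·p = ½(p + λb)`, `p·p = (λ/4)(a + b + 2p)`, and the linear span
of `{a, b, p}` is closed under multiplication; (ii) `a, b, p` are linearly independent;
(iii) with `θ := arccos √λ ∈ (0, π/2)` there is a unique (on the span) injective linear
representation sending `a ↦ [[1,0],[0,0]]` and `b ↦ B(θ)`. -/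
theorem jordan_two_projection_subalgebra
    {V : Type*} [NonAssocRing V] [Module ℝ V] [SMulCommClass ℝ V V] [IsScalarTower ℝ V V]
    (comm : ∀ x y : V, x * y = y * x)
    (jordan : ∀ x y : V, (x * y) * (x * x) = x * (y * (x * x)))
    (a b : V) (ha : a * a = a) (ha0 : a ≠ 0) (hb : b * b = b) (hb0 : b ≠ 0)
    (l : ℝ) (hl0 : 0 < l) (hl1 : l < 1)
    (hPa : (2 : ℝ) • (a * (a * b)) - a * b = l • a)
    (hPb : (2 : ℝ) • (b * (b * a)) - b * a = l • b)
    (p : V) (hp : p = a * b) :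
    (a * p = (1 / 2 : ℝ) • (p + l • a) ∧
     b * p = (1 / 2 : ℝ) • (p + l • b) ∧
     p * p = (l / 4 : ℝ) • (a + b + (2 : ℝ) • p) ∧
     (∀ x ∈ Submodule.span ℝ ({a, b, p} : Set V),
       ∀ y ∈ Submodule.span ℝ ({a, b, p} : Set V),
         x * y ∈ Submodule.span ℝ ({a, b, p} : Set V))) ∧
    LinearIndependent ℝ ![a, b, p] ∧
    (0 < Real.arccos (Real.sqrt l) ∧ Real.arccos (Real.sqrt l) < Real.pi / 2 ∧
     ∃ φ : V →ₗ[ℝ] Matrix (Fin 2) (Fin 2) ℝ,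
       IsAngleRep a b p (Real.arccos (Real.sqrt l)) φ ∧
       ∀ ψ : V →ₗ[ℝ] Matrix (Fin 2) (Fin 2) ℝ,
         IsAngleRep a b p (Real.arccos (Real.sqrt l)) ψ →
           ∀ x ∈ Submodule.span ℝ ({a, b, p} : Set V), ψ x = φ x) := by
  subst hp
  have T := TwoIdempotentTable.of_jordan comm jordan ha hb hPa hPb
  have hli := T.linearIndependent ha0 hb0 hl0.ne' hl1.ne
  obtain ⟨⟨hθ0, hθ1⟩, hcos⟩ := arccos_sqrt_mem_Ioo_and_cos_sq hl0 hl1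
  have hc := (Real.cos_pos_of_mem_Ioo ⟨by linarith [Real.pi_pos], hθ1⟩).ne'
  have hs := (Real.sin_pos_of_pos_of_lt_pi hθ0 (by linarith [Real.pi_pos])).ne'
  obtain ⟨φ, hφ⟩ := (hcos ▸ T).exists_isAngleRep hli hc hs
  exact ⟨⟨T.ap, T.bp, T.pp, fun x hx y hy => mul_mem_span_of_mul_mem T.mul_mem_span hx hy⟩,
    hli, hθ0, hθ1, φ, hφ, fun ψ hψ x hx => hψ.eqOn_span hφ hx⟩
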